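/- arXiv:2308.09185 — 4 statements merged into one kernel-verified Lean document; each statement's English description precedes it below -/
import Mathlib

section
/- Let G be a plane graph that contains neither K4 nor C5 (the cycle of length 5) as a subgraph, on n vertices with n ≥ 5, and with minimum degree δ(G) ≥ 3. Then the number of edges of G satisfies e(G) ≤ (15/7)(n − 2). -/
open SimpleGraph

namespace PlanarTuran

/-- Reversal of darts, as a permutation of the darts of `G`. -/
def dartRev {V : Type*} (G : SimpleGraph V) : Equiv.Perm G.Dart where
  toFun := Dart.symm
  invFun := Dart.symm
  left_inv d := Dart.symm_symm d
  right_inv d := Dart.symm_symm d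

/-- A rotation system (combinatorial embedding) of a simple graph `G`: a permutation of the
darts which fixes the initial vertex of every dart and is a single cycle on the darts leaving
each given vertex. -/
structure RotationSystem {V : Type*} (G : SimpleGraph V) where
  rot : Equiv.Perm G.Dart
  rot_fst : ∀ d : G.Dart, (rot d).fst = d.fst
  rot_cycle : ∀ d d' : G.Dart, d.fst = d'.fst → rot.SameCycle d d'

namespace RotationSystem

variable {V : Type*} {G : SimpleGraph V}

/-- The face permutation of the embedding: its orbits are the faces of the plane graph. -/
def facePerm (R : RotationSystem G) : Equiv.Perm G.Dart :=
  (dartRev G).trans R.rot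

/-- The face containing (the side of) a dart, encoded as the set of darts on its boundary walk. -/
def faceOf (R : RotationSystem G) (d : G.Dart) : Set G.Dart :=
  {d' | R.facePerm.SameCycle d d'}

/-- The length of the face incident to the dart `d`: the number of edge-sides on its
boundary walk (a bridge is counted twice). -/
noncomputable def faceLen (R : RotationSystem G) (d : G.Dart) : ℕ :=
  (R.faceOf d).ncard

/-- Darts lying on the same face. -/
def faceSetoid (R : RotationSystem G) : Setoid G.Dart :=
  ⟨R.facePerm.SameCycle,
   ⟨fun d => Equiv.Perm.SameCycle.refl _ d, fun h => h.symm, fun h h' => h.trans h'⟩⟩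

/-- The number of faces of the embedded graph (only counting faces having at least one edge on
their boundary). -/
noncomputable def numFaces (R : RotationSystem G) : ℕ :=
  Nat.card (Quotient R.faceSetoid)

/-- Darts on the same face, within the connected component `C`. -/
def faceSetoidIn (R : RotationSystem G) (C : G.ConnectedComponent) :
    Setoid {d : G.Dart // G.connectedComponentMk d.fst = C} :=
  ⟨fun d d' => R.facePerm.SameCycle d.1 d'.1,
   ⟨fun d => Equiv.Perm.SameCycle.refl _ _, fun h => h.symm, fun h h' => h.trans h'⟩⟩

/-- The rotation system is a *plane* (genus zero) embedding: every connected component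
containing at least one edge satisfies Euler's formula `n - e + f = 2`
(written here as `2*n + 2*f = 2*e + 4`, where `2*e` is the number of darts). -/
def GenusZero (R : RotationSystem G) : Prop :=
  ∀ C : G.ConnectedComponent, (∃ d : G.Dart, G.connectedComponentMk d.fst = C) →
    2 * Nat.card {v : V // G.connectedComponentMk v = C}
      + 2 * Nat.card (Quotient (R.faceSetoidIn C))
      = Nat.card {d : G.Dart // G.connectedComponentMk d.fst = C} + 4

/-- The contribution `f(e) = 1/l₁ + 1/l₂` of an edge `e` to the face number, where `l₁, l₂`
are the lengths of the faces incident to the two darts of `e` (for a bridge both darts lie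
on the same face, giving `f(e) = 2/l`). -/
noncomputable def fEdge [Fintype V] [DecidableEq V] [DecidableRel G.Adj]
    (R : RotationSystem G) (e : Sym2 V) : ℚ :=
  ∑ d ∈ Finset.univ.filter (fun d : G.Dart => d.edge = e), (1 : ℚ) / (R.faceLen d)

/-- The edges `e₁` and `e₂` both lie on a common `3`-face. -/
def shares3Face (R : RotationSystem G) (e₁ e₂ : Sym2 V) : Prop :=
  ∃ d₁ d₂ : G.Dart, d₁.edge = e₁ ∧ d₂.edge = e₂ ∧ R.faceLen d₁ = 3 ∧
    R.facePerm.SameCycle d₁ d₂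

/-- The triangular block generated by an edge `e`: the closure of `{e}` under adding all
edges of any `3`-face containing an edge already present. -/
def triBlockOf (R : RotationSystem G) (e : Sym2 V) : Set (Sym2 V) :=
  {e' | Relation.ReflTransGen R.shares3Face e e'}

/-- `B` is a triangular block of the plane graph `G`. -/
def IsTriangularBlock (R : RotationSystem G) (B : Set (Sym2 V)) : Prop :=
  ∃ e ∈ G.edgeSet, B = R.triBlockOf e

end RotationSystem

/-- A graph is planar iff it admits a genus-zero rotation system. -/
def _root_.SimpleGraph.IsPlanar {V : Type*} (G : SimpleGraph V) : Prop :=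
  ∃ R : RotationSystem G, R.GenusZero

/-- `G` contains no cycle of length `k`; equivalently, no subgraph isomorphic to `C_k`. -/
def _root_.SimpleGraph.CycleFree {V : Type*} (G : SimpleGraph V) (k : ℕ) : Prop :=
  ∀ ⦃v : V⦄ (w : G.Walk v v), w.IsCycle → w.length ≠ k

/-- A graph is 2-connected if it has at least 3 vertices and deleting any single vertex
leaves it connected. -/
def _root_.SimpleGraph.IsTwoConnected {V : Type*} (G : SimpleGraph V) : Prop :=
  3 ≤ Nat.card V ∧ ∀ v : V, (G.induce {u | u ≠ v}).Connected

/-- The set of vertices covered by a set `B` of edges. -/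
def blockVerts {V : Type*} (B : Set (Sym2 V)) : Set V :=
  {v | ∃ e ∈ B, v ∈ e}

/-- An edge set forming a single edge `K₂`. -/
def IsK2Block {V : Type*} (B : Set (Sym2 V)) : Prop :=
  ∃ u v : V, u ≠ v ∧ B = {s(u, v)}

/-- An edge set forming a triangle `K₃`. -/
def IsK3Block {V : Type*} (B : Set (Sym2 V)) : Prop :=
  ∃ u v w : V, u ≠ v ∧ u ≠ w ∧ v ≠ w ∧ B = {s(u, v), s(v, w), s(u, w)}

/-- An edge set forming `B₄`, two triangles `u v w` and `v w x` sharing the edge `v w`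
(`K₄` minus an edge). -/
def IsB4Block {V : Type*} (B : Set (Sym2 V)) : Prop :=
  ∃ u v w x : V, u ≠ v ∧ u ≠ w ∧ u ≠ x ∧ v ≠ w ∧ v ≠ x ∧ w ≠ x ∧
    B = {s(u, v), s(u, w), s(v, w), s(v, x), s(w, x)}

/-- An edge set forming `B₅ₐ`: a path `x₁x₂x₃x₄` plus an apex `y` joined to all of
`x₁, x₂, x₃, x₄`. -/
def IsB5aBlock {V : Type*} (B : Set (Sym2 V)) : Prop :=
  ∃ y x₁ x₂ x₃ x₄ : V, y ≠ x₁ ∧ y ≠ x₂ ∧ y ≠ x₃ ∧ y ≠ x₄ ∧ x₁ ≠ x₂ ∧ x₁ ≠ x₃ ∧ x₁ ≠ x₄ ∧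
    x₂ ≠ x₃ ∧ x₂ ≠ x₄ ∧ x₃ ≠ x₄ ∧
    B = {s(y, x₁), s(y, x₂), s(y, x₃), s(y, x₄), s(x₁, x₂), s(x₂, x₃), s(x₃, x₄)}

/-- An edge set forming `B₅ᵦ`, the wheel `W₄`: a `4`-cycle `x₁x₂x₃x₄` plus a center `c`
joined to all four cycle vertices. -/
def IsB5bBlock {V : Type*} (B : Set (Sym2 V)) : Prop :=
  ∃ c x₁ x₂ x₃ x₄ : V, c ≠ x₁ ∧ c ≠ x₂ ∧ c ≠ x₃ ∧ c ≠ x₄ ∧ x₁ ≠ x₂ ∧ x₁ ≠ x₃ ∧ x₁ ≠ x₄ ∧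
    x₂ ≠ x₃ ∧ x₂ ≠ x₄ ∧ x₃ ≠ x₄ ∧
    B = {s(c, x₁), s(c, x₂), s(c, x₃), s(c, x₄), s(x₁, x₂), s(x₂, x₃), s(x₃, x₄), s(x₄, x₁)}

end PlanarTuran

open PlanarTuran

/-!
The number of faces is `∑ 1 / ℓ(d)` over the darts `d`, where `ℓ(d)` is the length of the face of
`d`. Minimum degree `3` makes face boundaries non-backtracking and forbids a vertex with only two
face corners. Hence faces have length at least `3` and never `5` (no `C₅`), a face next to a
triangle has length at least `6`, and a triangle shares at most one edge with other triangles
(no `K₄`, no `C₅`). So an edge carries `1/ℓ₁ + 1/ℓ₂ ≤ 1/2` unless it lies on two triangles, and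
those edges carry at most a fifth of the darts; this gives `f ≤ 8e/15`, and Euler's formula
`n - e + f ≥ 2` gives `e ≤ 15/7 (n - 2)`.
-/

open Function Finset

theorem Equiv.Perm.ncard_sameCycle_eq_minimalPeriod {α : Type*} [Finite α] (f : Equiv.Perm α)
    (x : α) : {y | f.SameCycle x y}.ncard = minimalPeriod f x := by
  have horbit : {y | f.SameCycle x y} = MulAction.orbit (Subgroup.zpowers f) x := by
    ext y
    simp only [Set.mem_ofPred_eq, Equiv.Perm.SameCycle, MulAction.mem_orbit_iff]
    exact ⟨fun ⟨i, hi⟩ => ⟨⟨f ^ i, i, rfl⟩, hi⟩, fun ⟨⟨_, i, rfl⟩, h⟩ => ⟨i, h⟩⟩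
  have := Fintype.ofFinite (MulAction.orbit (Subgroup.zpowers f) x)
  rw [horbit, ← Nat.card_coe_set_eq, Nat.card_eq_fintype_card,
    ← MulAction.minimalPeriod_eq_card]
  rfl

theorem Setoid.card_quotient_eq_sum_inv_ncard {α : Type*} [Fintype α] (s : Setoid α) :
    (Nat.card (Quotient s) : ℚ) = ∑ a, (({b | s a b}.ncard : ℚ))⁻¹ := by
  classical
  rw [Nat.card_eq_fintype_card, Fintype.card, card_eq_sum_ones, Nat.cast_sum,
    ← sum_fiberwise univ (Quotient.mk s)]
  refine sum_congr rfl fun q _ => ?_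
  induction q using Quotient.inductionOn with
  | h a₀ =>
    set cls := univ.filter fun a => Quotient.mk s a = Quotient.mk s a₀
    have hcls : ∀ a ∈ cls, {b | s a b}.ncard = #cls := by
      intro a ha
      have haa : s a a₀ := Quotient.exact (mem_filter.1 ha).2
      rw [← Set.ncard_coe_finset]
      congr 1
      ext b
      simp only [cls, coe_filter, mem_univ, true_and, Set.mem_ofPred_eq, Quotient.eq]
      exact ⟨fun h => s.trans (s.symm h) haa, fun h => s.trans haa (s.symm h)⟩
    have hpos : (#cls : ℚ) ≠ 0 := by
      exact_mod_cast (card_pos.2 ⟨a₀, by simp [cls]⟩).ne'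
    rw [sum_congr rfl fun a ha => by rw [hcls a ha], sum_const, nsmul_eq_mul,
      mul_inv_cancel₀ hpos, Nat.cast_one]

theorem inv_add_inv_le_half {a b : ℕ} (h : 3 ≤ a ∧ 6 ≤ b ∨ 6 ≤ a ∧ 3 ≤ b ∨ 4 ≤ a ∧ 4 ≤ b) :
    (a : ℚ)⁻¹ + (b : ℚ)⁻¹ ≤ 1 / 2 := by
  have hinv {m k : ℕ} (hm : 0 < m) (hk : m ≤ k) : (k : ℚ)⁻¹ ≤ (m : ℚ)⁻¹ :=
    inv_anti₀ (by positivity) (by exact_mod_cast hk)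
  rcases h with ⟨ha, hb⟩ | ⟨ha, hb⟩ | ⟨ha, hb⟩ <;>
  · have := hinv (by norm_num) ha
    have := hinv (by norm_num) hb
    norm_num at *
    linarith

namespace SimpleGraph

variable {V : Type*} {G : SimpleGraph V} {a b c d e : V}

theorem CycleFree.false_of_pentagon (hC5 : G.CycleFree 5) (hab : G.Adj a b) (hbc : G.Adj b c)
    (hcd : G.Adj c d) (hde : G.Adj d e) (hea : G.Adj e a)
    (hac : a ≠ c) (hbd : b ≠ d) (hce : c ≠ e) (hda : d ≠ a) (heb : e ≠ b) : False :=
  hC5 (.cons hab (.cons hbc (.cons hcd (.cons hde (.cons hea .nil)))))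
    (by simp [Walk.cons_isCycle_iff, hab.ne, hbc.ne, hcd.ne, hde.ne, hea.ne, hac, hbd, hce,
      hda, hab.ne.symm, hea.ne.symm, hac.symm, hda.symm, heb.symm]) rfl

end SimpleGraph

namespace PlanarTuran.RotationSystem

variable {V : Type*} {G : SimpleGraph V} (R : RotationSystem G)

theorem facePerm_apply (d : G.Dart) : R.facePerm d = R.rot d.symm := rfl

theorem facePerm_fst (d : G.Dart) : (R.facePerm d).fst = d.snd := R.rot_fst d.symm

theorem faceLen_facePerm (d : G.Dart) : R.faceLen (R.facePerm d) = R.faceLen d := by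
  simp only [faceLen, faceOf, Equiv.Perm.sameCycle_apply_left]

def faceVertex (d : G.Dart) (i : ℕ) : V := ((R.facePerm ^ i) d).fst

@[simp]
theorem faceVertex_zero (d : G.Dart) : R.faceVertex d 0 = d.fst := rfl

theorem faceVertex_succ (d : G.Dart) (i : ℕ) :
    R.faceVertex d (i + 1) = ((R.facePerm ^ i) d).snd := by
  rw [faceVertex, pow_succ', Equiv.Perm.mul_apply, facePerm_fst]

@[simp]
theorem faceVertex_one (d : G.Dart) : R.faceVertex d 1 = d.snd := by
  simp [faceVertex_succ]

theorem adj_faceVertex_succ (d : G.Dart) (i : ℕ) :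
    G.Adj (R.faceVertex d i) (R.faceVertex d (i + 1)) := by
  rw [faceVertex_succ]
  exact ((R.facePerm ^ i) d).adj

theorem connectedComponentMk_faceVertex (d : G.Dart) (i : ℕ) :
    G.connectedComponentMk (R.faceVertex d i) = G.connectedComponentMk d.fst := by
  induction i with
  | zero => rfl
  | succ i ih =>
    rw [← ih]
    exact (ConnectedComponent.connectedComponentMk_eq_of_adj (R.adj_faceVertex_succ d i)).symm

section Finite

variable [Fintype V] [DecidableRel G.Adj]

theorem degree_le_of_rot_pow_eq {k : ℕ} (hk : 0 < k) {d : G.Dart} (h : (R.rot ^ k) d = d) :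
    G.degree d.fst ≤ k := by
  let toOrbit (w : G.neighborSet d.fst) : {d' | R.rot.SameCycle d d'} :=
    ⟨G.dartOfNeighborSet d.fst w, R.rot_cycle _ _ rfl⟩
  have htoOrbit : Injective toOrbit := fun w w' hw =>
    G.dartOfNeighborSet_injective d.fst (congrArg Subtype.val hw)
  calc G.degree d.fst = Nat.card (G.neighborSet d.fst) := by
        rw [Nat.card_eq_fintype_card, card_neighborSet_eq_degree]
    _ ≤ Nat.card {d' | R.rot.SameCycle d d'} := Nat.card_le_card_of_injective _ htoOrbit
    _ = minimalPeriod R.rot d := by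
        rw [Nat.card_coe_set_eq, Equiv.Perm.ncard_sameCycle_eq_minimalPeriod]
    _ ≤ k := IsPeriodicPt.minimalPeriod_le hk (by rwa [IsPeriodicPt, IsFixedPt,
        ← Equiv.Perm.coe_pow])

theorem rot_ne_self {d : G.Dart} (hd : 2 ≤ G.degree d.fst) : R.rot d ≠ d := fun h => by
  have := R.degree_le_of_rot_pow_eq one_pos (d := d) (by rwa [pow_one])
  omega

theorem rot_rot_ne_self {d : G.Dart} (hd : 3 ≤ G.degree d.fst) : R.rot (R.rot d) ≠ d :=
  fun h => by
  have := R.degree_le_of_rot_pow_eq two_pos (d := d) (by rwa [pow_two, Equiv.Perm.mul_apply])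
  omega

theorem facePerm_snd_ne_fst {d : G.Dart} (hd : 2 ≤ G.degree d.snd) :
    (R.facePerm d).snd ≠ d.fst := fun h =>
  R.rot_ne_self (d := d.symm) hd (Dart.ext _ _ (Prod.ext (R.facePerm_fst d) h))

theorem faceVertex_add_two_ne (hdeg : ∀ v, 2 ≤ G.degree v) (d : G.Dart) (i : ℕ) :
    R.faceVertex d (i + 2) ≠ R.faceVertex d i := by
  rw [faceVertex_succ, pow_succ', Equiv.Perm.mul_apply, faceVertex]
  exact R.facePerm_snd_ne_fst (hdeg _)

theorem faceLen_eq_minimalPeriod (d : G.Dart) : R.faceLen d = minimalPeriod R.facePerm d :=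
  Equiv.Perm.ncard_sameCycle_eq_minimalPeriod _ _

theorem facePerm_pow_faceLen (d : G.Dart) : (R.facePerm ^ R.faceLen d) d = d := by
  rw [faceLen_eq_minimalPeriod, Equiv.Perm.coe_pow, iterate_minimalPeriod]

theorem faceVertex_add_faceLen (d : G.Dart) (i : ℕ) :
    R.faceVertex d (i + R.faceLen d) = R.faceVertex d i := by
  rw [faceVertex, pow_add, Equiv.Perm.mul_apply, facePerm_pow_faceLen, faceVertex]

/-- Otherwise the face through `u` and the face through `(R.facePerm ^ k) v` would be the only two
corners at the vertex `u.snd`, of degree at least `3`. -/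
theorem faceVertex_two_ne_of_pow_eq_symm (hdeg : ∀ v, 3 ≤ G.degree v) {u v : G.Dart} {k : ℕ}
    (h : (R.facePerm ^ (k + 1)) v = u.symm) : R.faceVertex u 2 ≠ R.faceVertex v k := by
  set v' := (R.facePerm ^ k) v
  have hv' : R.facePerm v' = u.symm := by rwa [← Equiv.Perm.mul_apply, ← pow_succ']
  rw [faceVertex_succ, pow_one]
  intro h'
  have huv : u.snd = v'.snd := by rw [← R.facePerm_fst v', hv']; rfl
  have hu : R.facePerm u = v'.symm :=
    Dart.ext _ _ (Prod.ext ((R.facePerm_fst u).trans huv) h')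
  exact R.rot_rot_ne_self (d := u.symm) (hdeg _)
    (by rw [← facePerm_apply, hu, ← facePerm_apply, hv'])

theorem three_le_faceLen (hdeg : ∀ v, 2 ≤ G.degree v) (d : G.Dart) : 3 ≤ R.faceLen d := by
  have hpos : 0 < R.faceLen d := (Set.ncard_pos (Set.toFinite _)).2 ⟨d, .refl _ _⟩
  have hper := R.faceVertex_add_faceLen d 0
  by_contra! hlt
  obtain h | h : R.faceLen d = 1 ∨ R.faceLen d = 2 := by omega
  · rw [h] at hper
    exact (R.adj_faceVertex_succ d 0).ne hper.symm
  · rw [h] at hper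
    exact R.faceVertex_add_two_ne hdeg d 0 hper

theorem faceLen_ne_five (hdeg : ∀ v, 2 ≤ G.degree v) (hC5 : G.CycleFree 5) (d : G.Dart) :
    R.faceLen d ≠ 5 := by
  intro h5
  have hper (i : ℕ) : R.faceVertex d (i + 5) = R.faceVertex d i :=
    h5 ▸ R.faceVertex_add_faceLen d i
  have hadj := R.adj_faceVertex_succ d
  have hne := R.faceVertex_add_two_ne hdeg d
  exact hC5.false_of_pentagon (hadj 0) (hadj 1) (hadj 2) (hadj 3) (hper 0 ▸ hadj 4)
    (hne 0).symm (hne 1).symm (hne 2).symm (hper 0 ▸ hne 3).symm (hper 1 ▸ hne 4).symm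

theorem faceLen_symm_ne_four (hdeg : ∀ v, 3 ≤ G.degree v) (hC5 : G.CycleFree 5) {t : G.Dart}
    (ht : R.faceLen t = 3) : R.faceLen t.symm ≠ 4 := by
  intro hs
  -- With `t = ab`, the triangle `abc` and the quadrilateral `baxy` give the pentagon `axybc`.
  have hdeg2 v : 2 ≤ G.degree v := (hdeg v).trans' (by norm_num)
  have ht3 : R.faceVertex t 3 = t.fst := by simpa [ht] using R.faceVertex_add_faceLen t 0
  have hs4 : R.faceVertex t.symm 4 = t.snd := by
    simpa [hs] using R.faceVertex_add_faceLen t.symm 0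
  have hs1 : R.faceVertex t.symm 1 = t.fst := by simp
  have hxc : R.faceVertex t.symm 2 ≠ R.faceVertex t 2 :=
    R.faceVertex_two_ne_of_pow_eq_symm hdeg (by simpa [ht] using R.facePerm_pow_faceLen t)
  have hyc : R.faceVertex t 2 ≠ R.faceVertex t.symm 3 :=
    R.faceVertex_two_ne_of_pow_eq_symm hdeg (by simpa [hs] using R.facePerm_pow_faceLen t.symm)
  have hadj := R.adj_faceVertex_succ
  have hne := R.faceVertex_add_two_ne hdeg2
  refine hC5.false_of_pentagon (hs1 ▸ hadj t.symm 1) (hadj t.symm 2) (hs4 ▸ hadj t.symm 3)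
    (by simpa using hadj t 1) (ht3 ▸ hadj t 2) (hs1 ▸ hne t.symm 1).symm ?_ hyc.symm
    t.adj.ne.symm hxc.symm
  simpa using hne t.symm 0

theorem six_le_faceLen_of_faceLen_symm_eq_three (hdeg : ∀ v, 3 ≤ G.degree v)
    (hC5 : G.CycleFree 5) {d : G.Dart} (hd : R.faceLen d ≠ 3) (hs : R.faceLen d.symm = 3) :
    6 ≤ R.faceLen d := by
  have hdeg2 v : 2 ≤ G.degree v := (hdeg v).trans' (by norm_num)
  have h4 := R.faceLen_symm_ne_four hdeg hC5 hs
  rw [Dart.symm_symm] at h4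
  have h3 := R.three_le_faceLen hdeg2 d
  have h5 := R.faceLen_ne_five hdeg2 hC5 d
  omega

theorem inv_faceLen_add_inv_faceLen_symm_le (hdeg : ∀ v, 3 ≤ G.degree v) (hC5 : G.CycleFree 5)
    {d : G.Dart} (hd : ¬(R.faceLen d = 3 ∧ R.faceLen d.symm = 3)) :
    (R.faceLen d : ℚ)⁻¹ + (R.faceLen d.symm : ℚ)⁻¹ ≤ 1 / 2 := by
  have hdeg2 v : 2 ≤ G.degree v := (hdeg v).trans' (by norm_num)
  have h₁ := R.three_le_faceLen hdeg2 d
  have h₂ := R.three_le_faceLen hdeg2 d.symm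
  have h₁₂ := R.six_le_faceLen_of_faceLen_symm_eq_three hdeg hC5 (d := d)
  have h₂₁ := R.six_le_faceLen_of_faceLen_symm_eq_three hdeg hC5 (d := d.symm)
  rw [Dart.symm_symm] at h₂₁
  apply inv_add_inv_le_half
  omega

theorem faceLen_symm_facePerm_ne_three [DecidableEq V] (hdeg : ∀ v, 3 ≤ G.degree v)
    (hK4 : G.CliqueFree 4) (hC5 : G.CycleFree 5) {t : G.Dart} (ht : R.faceLen t = 3)
    (hs : R.faceLen t.symm = 3) : R.faceLen (R.facePerm t).symm ≠ 3 := by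
  intro hw
  -- The triangles `abc`, `bax` and `cby` of `t`, `t.symm` and `w`: if `x = y` then `abcx` is a
  -- `K₄`, otherwise `ycaxb` is a `C₅`.
  set w := (R.facePerm t).symm
  have ht3 : R.faceVertex t 3 = t.fst := by simpa [ht] using R.faceVertex_add_faceLen t 0
  have hs3 : R.faceVertex t.symm 3 = t.snd := by
    simpa [hs] using R.faceVertex_add_faceLen t.symm 0
  have hw3 : R.faceVertex w 3 = R.faceVertex t 2 := by
    simpa [hw, w, faceVertex_succ] using R.faceVertex_add_faceLen w 0
  have hs1 : R.faceVertex t.symm 1 = t.fst := by simp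
  have hw1 : R.faceVertex w 1 = t.snd := by simp [w, facePerm_fst]
  have hxc : R.faceVertex t.symm 2 ≠ R.faceVertex t 2 :=
    R.faceVertex_two_ne_of_pow_eq_symm hdeg (by simpa [ht] using R.facePerm_pow_faceLen t)
  have hya : R.faceVertex w 2 ≠ t.fst :=
    R.faceVertex_two_ne_of_pow_eq_symm (k := 0) hdeg (by simp [w])
  have hadj := R.adj_faceVertex_succ
  have hbc : G.Adj t.snd (R.faceVertex t 2) := by simpa using hadj t 1
  have hca : G.Adj (R.faceVertex t 2) t.fst := ht3 ▸ hadj t 2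
  have hax : G.Adj t.fst (R.faceVertex t.symm 2) := hs1 ▸ hadj t.symm 1
  have hxb : G.Adj (R.faceVertex t.symm 2) t.snd := hs3 ▸ hadj t.symm 2
  have hyc : G.Adj (R.faceVertex w 2) (R.faceVertex t 2) := hw3 ▸ hadj w 2
  by_cases hxy : R.faceVertex t.symm 2 = R.faceVertex w 2
  · rw [← hxy] at hyc
    exact hK4 _ ((is3Clique_triple_iff.2 ⟨hbc, hxb.symm, hyc.symm⟩).insert (a := t.fst)
      (by simp [t.adj, hca.symm, hax]))
  · exact hC5.false_of_pentagon hyc hca hax hxb (hw1 ▸ hadj w 1) hya hxc.symm t.adj.ne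
      hxy hbc.ne

theorem facePerm_facePerm_facePerm_of_faceLen_eq_three {d : G.Dart} (hd : R.faceLen d = 3) :
    R.facePerm (R.facePerm (R.facePerm d)) = d := by
  simpa [hd, pow_succ] using R.facePerm_pow_faceLen d

/-- A triangle has at most one edge shared with another triangle, so each dart whose two sides
are triangles is followed by two darts on its face whose reverse side is not a triangle. -/
theorem two_mul_card_filter_faceLen_eq_three_le [DecidableEq V] (hdeg : ∀ v, 3 ≤ G.degree v)
    (hK4 : G.CliqueFree 4) (hC5 : G.CycleFree 5) :
    2 * #{d | R.faceLen d = 3 ∧ R.faceLen d.symm = 3}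
      ≤ #{d | R.faceLen d = 3 ∧ R.faceLen d.symm ≠ 3} := by
  set A₁ := ({d | R.faceLen d = 3 ∧ R.faceLen d.symm = 3} : Finset G.Dart)
  set A₂ := ({d | R.faceLen d = 3 ∧ R.faceLen d.symm ≠ 3} : Finset G.Dart)
  have h₁ {d} (hd : d ∈ A₁) : R.facePerm d ∈ A₂ := by
    simp only [A₁, A₂, mem_filter, mem_univ, true_and, faceLen_facePerm] at hd ⊢
    exact ⟨hd.1, R.faceLen_symm_facePerm_ne_three hdeg hK4 hC5 hd.1 hd.2⟩
  have h₂ {d} (hd : d ∈ A₁) : R.facePerm (R.facePerm d) ∈ A₂ := by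
    simp only [A₁, A₂, mem_filter, mem_univ, true_and, faceLen_facePerm] at hd ⊢
    refine ⟨hd.1, fun h => ?_⟩
    have := R.faceLen_symm_facePerm_ne_three hdeg hK4 hC5
      (t := R.facePerm (R.facePerm d)) (by rw [faceLen_facePerm, faceLen_facePerm, hd.1]) h
    rw [R.facePerm_facePerm_facePerm_of_faceLen_eq_three hd.1] at this
    exact this hd.2
  have hdisj :
      Disjoint (A₁.image R.facePerm) (A₁.image fun d => R.facePerm (R.facePerm d)) := by
    refine disjoint_left.2 fun x hx hx' => ?_
    obtain ⟨d, hd, rfl⟩ := mem_image.1 hx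
    obtain ⟨d', hd', hdd'⟩ := mem_image.1 hx'
    have := (mem_filter.1 (h₁ hd')).2.2
    rw [R.facePerm.injective hdd'] at this
    exact this (mem_filter.1 hd).2.2
  calc 2 * #A₁ = #(A₁.image R.facePerm ∪ A₁.image fun d => R.facePerm (R.facePerm d)) := by
        rw [card_union_of_disjoint hdisj, card_image_of_injective _ R.facePerm.injective,
          card_image_of_injective _ fun _ _ h => R.facePerm.injective (R.facePerm.injective h)]
        ring
    _ ≤ #A₂ := card_le_card (union_subset (image_subset_iff.2 fun _ => h₁)
        (image_subset_iff.2 fun _ => h₂))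

theorem five_mul_card_filter_faceLen_eq_three_le [DecidableEq V] (hdeg : ∀ v, 3 ≤ G.degree v)
    (hK4 : G.CliqueFree 4) (hC5 : G.CycleFree 5) :
    5 * #{d | R.faceLen d = 3 ∧ R.faceLen d.symm = 3} ≤ Fintype.card G.Dart := by
  set A₁ := ({d | R.faceLen d = 3 ∧ R.faceLen d.symm = 3} : Finset G.Dart)
  set A₂ := ({d | R.faceLen d = 3 ∧ R.faceLen d.symm ≠ 3} : Finset G.Dart)
  set B := ({d | R.faceLen d ≠ 3 ∧ R.faceLen d.symm = 3} : Finset G.Dart)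
  have hB : #B = #A₂ := card_nbij' Dart.symm Dart.symm
    (fun d hd => by simpa [A₂, B, and_comm] using hd)
    (fun d hd => by simpa [A₂, B, and_comm] using hd)
    (fun d _ => d.symm_symm) (fun d _ => d.symm_symm)
  have hdisj₁ : Disjoint A₁ A₂ := disjoint_filter.2 fun _ _ h h' => h'.2 h.2
  have hdisj₂ : Disjoint (A₁ ∪ A₂) B :=
    disjoint_union_left.2 ⟨disjoint_filter.2 fun _ _ h h' => h'.1 h.1,
      disjoint_filter.2 fun _ _ h h' => h'.1 h.1⟩
  have hcard : #A₁ + #A₂ + #B ≤ Fintype.card G.Dart := by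
    rw [← card_union_of_disjoint hdisj₁, ← card_union_of_disjoint hdisj₂]
    exact card_le_univ _
  have h₂ : 2 * #A₁ ≤ #A₂ := R.two_mul_card_filter_faceLen_eq_three_le hdeg hK4 hC5
  omega

theorem sum_inv_faceLen_le [DecidableEq V] (hdeg : ∀ v, 3 ≤ G.degree v) (hK4 : G.CliqueFree 4)
    (hC5 : G.CycleFree 5) :
    ∑ d, (R.faceLen d : ℚ)⁻¹ ≤ 4 / 15 * Fintype.card G.Dart := by
  set bothTriangles : G.Dart → Prop := fun d : G.Dart => R.faceLen d = 3 ∧ R.faceLen d.symm = 3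
  have hsymm : ∑ d : G.Dart, (R.faceLen d.symm : ℚ)⁻¹ = ∑ d, (R.faceLen d : ℚ)⁻¹ :=
    Equiv.sum_comp (dartRev G) fun d => (R.faceLen d : ℚ)⁻¹
  have hedge (d : G.Dart) : (R.faceLen d : ℚ)⁻¹ + (R.faceLen d.symm : ℚ)⁻¹
      ≤ 1 / 2 + 1 / 6 * if bothTriangles d then 1 else 0 := by
    split_ifs with h
    · rw [h.1, h.2]
      norm_num
    · simpa using R.inv_faceLen_add_inv_faceLen_symm_le hdeg hC5 h
  have hcount : (5 * #{d | bothTriangles d} : ℚ) ≤ Fintype.card G.Dart := by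
    exact_mod_cast R.five_mul_card_filter_faceLen_eq_three_le hdeg hK4 hC5
  calc ∑ d, (R.faceLen d : ℚ)⁻¹
      = 1 / 2 * ∑ d : G.Dart, ((R.faceLen d : ℚ)⁻¹ + (R.faceLen d.symm : ℚ)⁻¹) := by
        rw [sum_add_distrib, hsymm]
        ring
    _ ≤ 1 / 2 * ∑ d, (1 / 2 + 1 / 6 * if bothTriangles d then (1 : ℚ) else 0) := by
        exact mul_le_mul_of_nonneg_left (sum_le_sum fun d _ => hedge d) (by norm_num)
    _ = 1 / 4 * Fintype.card G.Dart + 1 / 12 * #{d | bothTriangles d} := by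
        rw [sum_add_distrib, ← mul_sum, sum_boole, sum_const, card_univ, nsmul_eq_mul]
        ring
    _ ≤ 4 / 15 * Fintype.card G.Dart := by linarith

theorem card_quotient_faceSetoidIn [DecidableEq G.ConnectedComponent]
    (C : G.ConnectedComponent) :
    (Nat.card (Quotient (R.faceSetoidIn C)) : ℚ)
      = ∑ d : {d : G.Dart // G.connectedComponentMk d.fst = C}, (R.faceLen d : ℚ)⁻¹ := by
  rw [Setoid.card_quotient_eq_sum_inv_ncard]
  refine sum_congr rfl fun d _ => ?_
  have hface : R.faceOf d ⊆
      Set.range ((↑) : {d : G.Dart // G.connectedComponentMk d.fst = C} → _) := fun x hx => by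
    obtain ⟨n, rfl⟩ := Equiv.Perm.SameCycle.exists_nat_pow_eq hx
    exact ⟨⟨(R.facePerm ^ n) d, (R.connectedComponentMk_faceVertex d n).trans d.2⟩, rfl⟩
  rw [faceLen, ← Set.ncard_preimage_of_injective_subset_range Subtype.val_injective hface]
  rfl

variable {R} in
/-- Euler's formula summed over the components; each face is counted with weight
`1 / faceLen d` by each of its darts `d`. -/
theorem GenusZero.euler (hR : R.GenusZero) (hdeg : ∀ v, 0 < G.degree v) :
    2 * (Fintype.card V : ℚ) + 2 * ∑ d, (R.faceLen d : ℚ)⁻¹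
      = Fintype.card G.Dart + 4 * Nat.card G.ConnectedComponent := by
  classical
  have := Fintype.ofFinite G.ConnectedComponent
  have hC (C : G.ConnectedComponent) :
      2 * (Nat.card {v // G.connectedComponentMk v = C} : ℚ)
        + 2 * ∑ d : {d : G.Dart // G.connectedComponentMk d.fst = C}, (R.faceLen d : ℚ)⁻¹
      = Nat.card {d : G.Dart // G.connectedComponentMk d.fst = C} + 4 := by
    induction C using ConnectedComponent.ind with | h v => ?_
    obtain ⟨w, hw⟩ := (G.degree_pos_iff_exists_adj v).1 (hdeg v)
    rw [← R.card_quotient_faceSetoidIn]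
    exact_mod_cast hR _ ⟨⟨(v, w), hw⟩, rfl⟩
  have hV : ∑ C, (Nat.card {v // G.connectedComponentMk v = C} : ℚ) = Fintype.card V := by
    rw [← Nat.cast_sum, ← Nat.card_sigma, Nat.card_congr (Equiv.sigmaFiberEquiv _),
      Nat.card_eq_fintype_card]
  have hD : ∑ C, (Nat.card {d : G.Dart // G.connectedComponentMk d.fst = C} : ℚ)
      = Fintype.card G.Dart := by
    rw [← Nat.cast_sum, ← Nat.card_sigma, Nat.card_congr (Equiv.sigmaFiberEquiv _),
      Nat.card_eq_fintype_card]
  have hfaces : ∑ C, ∑ d : {d : G.Dart // G.connectedComponentMk d.fst = C},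
      (R.faceLen d : ℚ)⁻¹ = ∑ d, (R.faceLen d : ℚ)⁻¹ :=
    Fintype.sum_fiberwise (fun d : G.Dart => G.connectedComponentMk d.fst)
      fun d => (R.faceLen d : ℚ)⁻¹
  calc 2 * (Fintype.card V : ℚ) + 2 * ∑ d, (R.faceLen d : ℚ)⁻¹
      = ∑ C, (2 * (Nat.card {v // G.connectedComponentMk v = C} : ℚ)
          + 2 * ∑ d : {d : G.Dart // G.connectedComponentMk d.fst = C}, (R.faceLen d : ℚ)⁻¹) := by
        rw [sum_add_distrib, ← mul_sum, ← mul_sum, hV, hfaces]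
    _ = ∑ C, ((Nat.card {d : G.Dart // G.connectedComponentMk d.fst = C} : ℚ) + 4) :=
        sum_congr rfl fun C _ => hC C
    _ = Fintype.card G.Dart + 4 * Nat.card G.ConnectedComponent := by
        rw [sum_add_distrib, hD, sum_const, card_univ, nsmul_eq_mul, Nat.card_eq_fintype_card]
        ring

end Finite

end PlanarTuran.RotationSystem

/-- Let `G` be a plane graph (a graph together with a genus-zero embedding)
containing neither `K₄` nor `C₅` as a subgraph, on `n ≥ 5` vertices, with minimum degree at
least `3`. Then `e(G) ≤ (15/7)(n - 2)`. -/
theorem planeGraph_K4_C5_free_minDeg_three_edge_bound {V : Type*} [Fintype V] [DecidableEq V]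
    (G : SimpleGraph V) [DecidableRel G.Adj]
    (R : PlanarTuran.RotationSystem G) (hplane : R.GenusZero)
    (hK4 : G.CliqueFree 4) (hC5 : G.CycleFree 5)
    (n : ℕ) (hn : Fintype.card V = n) (hn5 : 5 ≤ n)
    (hdeg : ∀ v : V, 3 ≤ G.degree v) :
    (G.edgeFinset.card : ℚ) ≤ 15 / 7 * ((n : ℚ) - 2) := by
  have hfaces := R.sum_inv_faceLen_le hdeg hK4 hC5
  have heuler := hplane.euler fun v => (hdeg v).trans_lt' (by norm_num)
  have : Nonempty V := Fintype.card_pos_iff.1 (by omega)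
  have hcomp : (1 : ℚ) ≤ Nat.card G.ConnectedComponent := by exact_mod_cast Nat.card_pos
  have hdarts : (Fintype.card G.Dart : ℚ) = 2 * G.edgeFinset.card := by
    exact_mod_cast G.dart_card_eq_twice_card_edges
  rw [hn] at heuler
  linarith
end

section
/- Let G be a planar graph on n vertices with n ≥ 2 that contains neither K4 nor C5 as a subgraph, and such that G contains no maximal 2-connected subgraph on more than 4 vertices. Then e(G) ≤ 2n − 15/7. -/
open SimpleGraph

open PlanarTuran

/-! A `K₄`-free graph on `n ≥ 2` vertices whose 2-connected subgraphs have at most 4 vertices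
has at most `2n - 3` edges, which is below `2n - 15/7`. On at most 4 vertices this is Turán's
bound. On more vertices the graph is not 2-connected, so a cut vertex splits it into two induced
subgraphs on `n₁, n₂ ≥ 2` vertices with `n₁ + n₂ = n + 1` that together contain every edge, and
induction gives at most `(2n₁ - 3) + (2n₂ - 3) = 2n - 4` edges. -/

universe u

namespace SimpleGraph

variable {V W : Type*} {G : SimpleGraph V}

theorem Iso.isTwoConnected {H : SimpleGraph W} (φ : G ≃g H) (h : G.IsTwoConnected) :
    H.IsTwoConnected := by
  refine ⟨Nat.card_congr φ.toEquiv ▸ h.1, fun v => ?_⟩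
  have hφ : Set.BijOn φ {u | u ≠ φ.symm v} {u | u ≠ v} :=
    φ.toEquiv.bijOn fun a => by simp [φ.eq_symm_apply]
  exact (φ.induce hφ).connected_iff.mp (h.2 _)

theorem ncard_edgeSet_induce [Finite V] (s : Set V) :
    (G.induce s).edgeSet.ncard = (G.edgeSet ∩ s.sym2).ncard := by
  classical
  cases nonempty_fintype V
  have h := congrArg Finset.card (G.map_edgeFinset_induce (s := s))
  rw [Finset.card_map] at h
  rw [← coe_edgeFinset, Set.ncard_coe_finset, h, ← Set.ncard_coe_finset]
  simp

theorem ncard_edgeSet_le_of_subset_union_sym2 [Finite V] {s t : Set V}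
    (h : G.edgeSet ⊆ s.sym2 ∪ t.sym2) :
    G.edgeSet.ncard ≤ (G.induce s).edgeSet.ncard + (G.induce t).edgeSet.ncard := by
  rw [ncard_edgeSet_induce, ncard_edgeSet_induce]
  calc G.edgeSet.ncard = (G.edgeSet ∩ s.sym2 ∪ G.edgeSet ∩ t.sym2).ncard := by
        rw [← Set.inter_union_distrib_left, Set.inter_eq_left.mpr h]
    _ ≤ _ := Set.ncard_union_le _ _

theorem CliqueFree.card_edgeFinset_add_three_le [Fintype V] [DecidableRel G.Adj]
    (hK4 : G.CliqueFree 4) (h2 : 2 ≤ Fintype.card V) (h4 : Fintype.card V ≤ 4) :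
    G.edgeFinset.card + 3 ≤ 2 * Fintype.card V := by
  have := hK4.card_edgeFinset_le (r := 3)
  interval_cases Fintype.card V <;> simp_all

theorem exists_closed_of_not_connected_induce_ne [Nontrivial V] {v : V}
    (hv : ¬(G.induce {u | u ≠ v}).Connected) :
    ∃ A : Set V, v ∉ A ∧ A.Nonempty ∧ (∃ b ∉ A, b ≠ v) ∧
      ∀ ⦃p q⦄, G.Adj p q → q ≠ v → p ∈ A → q ∈ A := by
  obtain ⟨w, hw⟩ := exists_ne v
  have : Nonempty {u | u ≠ v} := ⟨⟨w, hw⟩⟩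
  obtain ⟨a, b, hab⟩ : ∃ a b : {u | u ≠ v}, ¬(G.induce {u | u ≠ v}).Reachable a b := by
    by_contra! h
    exact hv ⟨fun a b => h a b⟩
  refine ⟨{u | ∃ h : u ≠ v, (G.induce {u | u ≠ v}).Reachable a ⟨u, h⟩},
    fun ⟨h, _⟩ => h rfl, ⟨a, a.2, .rfl⟩, ⟨b, fun ⟨_, h⟩ => hab h, b.2⟩, ?_⟩
  rintro p q hpq hq ⟨hp, hr⟩
  exact ⟨hq, hr.trans (Adj.reachable (G := G.induce _) hpq)⟩

theorem exists_separation_of_not_connected_induce_ne [Finite V] [Nontrivial V] {v : V}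
    (hv : ¬(G.induce {u | u ≠ v}).Connected) :
    ∃ s t : Set V, s.ncard + t.ncard = Nat.card V + 1 ∧ 2 ≤ s.ncard ∧ 2 ≤ t.ncard ∧
      G.edgeSet ⊆ s.sym2 ∪ t.sym2 := by
  obtain ⟨A, hvA, hA, ⟨b, hbA, hbv⟩, hclosed⟩ := exists_closed_of_not_connected_induce_ne hv
  refine ⟨insert v A, Aᶜ, ?_, ?_, ?_, ?_⟩
  · rw [Set.ncard_insert_of_notMem hvA, add_right_comm, Set.ncard_add_ncard_compl]
  · rw [Set.ncard_insert_of_notMem hvA]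
    have := hA.ncard_pos
    omega
  · calc 2 = ({b, v} : Set V).ncard := (Set.ncard_pair hbv).symm
      _ ≤ Aᶜ.ncard := Set.ncard_le_ncard (Set.pair_subset hbA hvA)
  · rintro ⟨p, q⟩ hpq
    have hpq' := @hclosed p q hpq
    have hqp' := @hclosed q p hpq.symm
    simp only [Set.mem_union, Set.mk_mem_sym2_iff, Set.mem_insert_iff, Set.mem_compl_iff]
    by_cases hp : p = v
    · subst hp
      tauto
    by_cases hq : q = v
    · subst hq
      tauto
    tauto

section TwoConnectedCardLE

variable {V W : Type u} {G : SimpleGraph V} {k : ℕ}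

def TwoConnectedCardLE (G : SimpleGraph V) (k : ℕ) : Prop :=
  ∀ ⦃W : Type u⦄ (H : SimpleGraph W), H ⊑ G → H.IsTwoConnected → Nat.card W ≤ k

theorem TwoConnectedCardLE.anti {H : SimpleGraph W} (hHG : H ⊑ G)
    (hG : G.TwoConnectedCardLE k) : H.TwoConnectedCardLE k :=
  fun _ K hKH => hG K (hKH.trans hHG)

theorem twoConnectedCardLE_of_maximal [Finite V]
    (h : ∀ B : G.Subgraph,
      Maximal (fun K : G.Subgraph => K.coe.IsTwoConnected) B → Nat.card B.verts ≤ k) :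
    G.TwoConnectedCardLE k := by
  intro W H hHG hH
  obtain ⟨G', ⟨φ⟩⟩ := hHG.exists_iso_subgraph
  obtain ⟨B, hG'B, hB⟩ := Finite.exists_le_maximal
    (p := fun K : G.Subgraph => K.coe.IsTwoConnected) (φ.isTwoConnected hH)
  calc Nat.card W = Nat.card G'.verts := Nat.card_congr φ.toEquiv
    _ ≤ Nat.card B.verts := Nat.card_mono (Set.toFinite _) hG'B.1
    _ ≤ k := h B hB

theorem ncard_edgeSet_add_three_le [Finite V] (hK4 : G.CliqueFree 4)
    (hG : G.TwoConnectedCardLE 4) (hV : 2 ≤ Nat.card V) :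
    G.edgeSet.ncard + 3 ≤ 2 * Nat.card V := by
  induction hn : Nat.card V using Nat.strong_induction_on generalizing V with | _ n ih =>
  rcases le_or_gt n 4 with hn4 | hn4
  · classical
    cases nonempty_fintype V
    rw [Nat.card_eq_fintype_card] at hV hn
    rw [← coe_edgeFinset, Set.ncard_coe_finset, ← hn]
    exact hK4.card_edgeFinset_add_three_le hV (hn ▸ hn4)
  obtain ⟨v, hv⟩ : ∃ v, ¬(G.induce {u | u ≠ v}).Connected := by
    by_contra! h
    have := hG G .rfl ⟨by omega, h⟩
    omega
  have : Nontrivial V := Finite.one_lt_card_iff_nontrivial.mp (by omega)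
  obtain ⟨s, t, hst, hs, ht, hE⟩ := exists_separation_of_not_connected_induce_ne hv
  have hind : ∀ r : Set V, 2 ≤ r.ncard → r.ncard < n →
      (G.induce r).edgeSet.ncard + 3 ≤ 2 * r.ncard := fun r h2 hlt => by
    have hr := (Embedding.induce (G := G) r).isContained
    rw [← Nat.card_coe_set_eq] at h2 hlt ⊢
    exact ih _ hlt (hK4.comap hr) (hG.anti hr) h2 rfl
  have := ncard_edgeSet_le_of_subset_union_sym2 hE
  have := hind s hs (by omega)
  have := hind t ht (by omega)
  omega

end TwoConnectedCardLE

end SimpleGraph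

theorem planar_K4_C5_free_small_blocks_edge_bound_general {V : Type*} [Fintype V]
    (G : SimpleGraph V) [DecidableRel G.Adj]
    (hK4 : G.CliqueFree 4)
    (n : ℕ) (hn : Fintype.card V = n) (hn2 : 2 ≤ n)
    (hblocks : ∀ H : G.Subgraph,
      Maximal (fun K : G.Subgraph => K.coe.IsTwoConnected) H → Nat.card H.verts ≤ 4) :
    (G.edgeFinset.card : ℚ) ≤ 2 * (n : ℚ) - 15 / 7 := by
  have h := ncard_edgeSet_add_three_le hK4 (twoConnectedCardLE_of_maximal hblocks)
    (by rwa [Nat.card_eq_fintype_card, hn])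
  rw [← coe_edgeFinset, Set.ncard_coe_finset, Nat.card_eq_fintype_card, hn] at h
  have : (G.edgeFinset.card : ℚ) + 3 ≤ 2 * n := by exact_mod_cast h
  linarith

/-- Let `G` be a planar graph on `n ≥ 2` vertices containing neither `K₄` nor
`C₅` as a subgraph, such that `G` contains no maximal `2`-connected subgraph on more than `4`
vertices. Then `e(G) ≤ 2n - 15/7`. -/
theorem planar_K4_C5_free_small_blocks_edge_bound {V : Type*} [Fintype V] [DecidableEq V]
    (G : SimpleGraph V) [DecidableRel G.Adj]
    (hplanar : G.IsPlanar) (hK4 : G.CliqueFree 4) (hC5 : G.CycleFree 5)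
    (n : ℕ) (hn : Fintype.card V = n) (hn2 : 2 ≤ n)
    (hblocks : ∀ H : G.Subgraph,
      Maximal (fun K : G.Subgraph => K.coe.IsTwoConnected) H → Nat.card H.verts ≤ 4) :
    (G.edgeFinset.card : ℚ) ≤ 2 * (n : ℚ) - 15 / 7 :=
  planar_K4_C5_free_small_blocks_edge_bound_general G hK4 n hn hn2 hblocks
end

section
/- Let G be a planar graph on n vertices with n ≥ 2 that contains neither K4 nor C6 as a subgraph, and such that G contains no maximal 2-connected subgraph on more than 5 vertices. Then e(G) ≤ (31/15)n − 7/3. -/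
open SimpleGraph

open PlanarTuran

/-! Induct on vertex sets `S`. If `S` spans a `2`-connected subgraph, then `|S| ≤ 5`, and a
`K₄`-free graph on `m ≤ 5` vertices has at most `2m - 2` edges (Turán's theorem). Otherwise a cut
vertex splits `S` into two smaller sets sharing one vertex, and `e ≤ 2m - 2` survives such a
gluing. Finally `2n - 2 ≤ 31n/15 - 7/3` for `n ≥ 5`, and Turán's theorem settles `n ≤ 4`. -/

open Finset

namespace SimpleGraph

variable {V : Type*} {G : SimpleGraph V}

theorem Subgraph.card_verts_le_of_forall_maximal [Finite V] {P : G.Subgraph → Prop} {k : ℕ}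
    (h : ∀ H, Maximal P H → Nat.card H.verts ≤ k) {K : G.Subgraph} (hK : P K) :
    Nat.card K.verts ≤ k := by
  obtain ⟨H, hKH, hH⟩ := Finite.exists_le_maximal hK
  exact (Nat.card_mono (Set.toFinite _) (Subgraph.verts_mono hKH)).trans (h H hH)

theorem CliqueFree.card_edgeFinset_add_two_le_of_card_le_five {W : Type*} [Fintype W]
    {H : SimpleGraph W} [DecidableRel H.Adj] (hH : H.CliqueFree 4)
    (h1 : 1 ≤ Fintype.card W) (h5 : Fintype.card W ≤ 5) :
    #H.edgeFinset + 2 ≤ 2 * Fintype.card W := by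
  have turan := hH.card_edgeFinset_le (r := 3)
  interval_cases Fintype.card W <;>
    simp only [Nat.reduceMod, Nat.reducePow, Nat.reduceSub, Nat.reduceMul, Nat.reduceDiv,
      Nat.choose] at turan <;> omega

theorem exists_separation_of_not_isTwoConnected [DecidableEq V] {S : Finset V} (h3 : 3 ≤ #S)
    (h : ¬((⊤ : G.Subgraph).induce ↑S).coe.IsTwoConnected) :
    ∃ v ∈ S, ∃ A ⊆ S.erase v, A.Nonempty ∧ A ≠ S.erase v ∧
      ∀ a ∈ A, ∀ b ∈ S \ A, G.Adj a b → b = v := by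
  classical
  have hcard : 3 ≤ Nat.card ((⊤ : G.Subgraph).induce ↑S).verts := by
    simpa [Subgraph.induce_verts] using h3
  obtain ⟨v, hv⟩ : ∃ v, ¬(((⊤ : G.Subgraph).induce ↑S).coe.induce {u | u ≠ v}).Connected := by
    simpa only [IsTwoConnected, hcard, true_and, not_forall] using h
  set H := ((⊤ : G.Subgraph).induce ↑S).coe.induce {u | u ≠ v}
  obtain ⟨w, hwS, hwv⟩ := S.exists_mem_ne (by omega) v
  have : Nonempty {u | u ≠ v} := ⟨⟨⟨w, hwS⟩, fun h => hwv (congrArg Subtype.val h)⟩⟩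
  obtain ⟨x, y, hxy⟩ : ∃ x y, ¬H.Reachable x y := by
    by_contra! hpre
    exact hv ⟨hpre⟩
  refine ⟨v, v.2, {u ∈ S | ∃ z : {u | u ≠ v}, z.1.1 = u ∧ H.Reachable x z}, ?_, ?_, ?_, ?_⟩
  · intro u hu
    obtain ⟨huS, z, rfl, -⟩ := mem_filter.1 hu
    exact mem_erase.2 ⟨fun h => z.2 (Subtype.ext h), huS⟩
  · exact ⟨x.1.1, mem_filter.2 ⟨x.1.2, x, rfl, .refl _⟩⟩
  · intro hA
    obtain ⟨-, z, hzy, hxz⟩ := mem_filter.1 <| hA ▸ mem_erase.2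
      ⟨fun h => y.2 (Subtype.ext h), y.1.2⟩
    exact hxy (by rwa [← Subtype.ext (Subtype.ext hzy)])
  · intro a ha b hb hab
    obtain ⟨haS, z, rfl, hxz⟩ := mem_filter.1 ha
    obtain ⟨hbS, hbA⟩ := mem_sdiff.1 hb
    by_contra hbv
    let z' : {u | u ≠ v} := ⟨⟨b, hbS⟩, fun h => hbv (congrArg Subtype.val h)⟩
    have hzz' : H.Adj z z' := ⟨z.1.2, hbS, hab⟩
    exact hbA (mem_filter.2 ⟨hbS, z', rfl, hxz.trans hzz'.reachable⟩)

variable [Fintype V] [DecidableRel G.Adj]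

theorem card_edgeFinset_induce_le_add_of_separates [DecidableEq V] {S A : Finset V} {v : V}
    (hA : ∀ a ∈ A, ∀ b ∈ S \ A, G.Adj a b → b = v) :
    #(G.induce ↑S).edgeFinset ≤
      #(G.induce ↑(insert v A)).edgeFinset + #(G.induce ↑(S \ A)).edgeFinset := by
  simp only [← card_filter_edgeFinset_toFinset_subset, filter_edgeFinset_toFinset_subset]
  rw [← card_union_of_disjoint]
  · refine card_le_card fun e he => ?_
    induction e using Sym2.ind with | _ a b => ?_
    simp only [mem_inter, mem_union, mem_edgeFinset, mem_edgeSet, mk_mem_sym2_iff, mem_insert,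
      mem_sdiff] at he ⊢
    have := he.1.symm
    grind
  · rw [Finset.disjoint_left]
    intro e he he'
    induction e using Sym2.ind with | _ a b => ?_
    simp only [mem_inter, mem_edgeFinset, mem_edgeSet, mk_mem_sym2_iff, mem_insert,
      mem_sdiff] at he he'
    grind [G.ne_of_adj]

theorem card_edgeFinset_induce_add_two_le (hK4 : G.CliqueFree 4)
    (hsmall : ∀ K : G.Subgraph, K.coe.IsTwoConnected → Nat.card K.verts ≤ 5)
    (S : Finset V) (hS : S.Nonempty) : #(G.induce ↑S).edgeFinset + 2 ≤ 2 * #S := by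
  classical
  induction S using Finset.strongInduction with | H S ih => ?_
  by_cases h5 : #S ≤ 5
  · have hK4S := hK4.comap (Embedding.induce (S : Set V)).isContained
    simpa using hK4S.card_edgeFinset_add_two_le_of_card_le_five (by simpa using hS.card_pos)
      (by simpa using h5)
  obtain ⟨v, hvS, A, hAv, hA, hAv_ne, hsep⟩ := exists_separation_of_not_isTwoConnected
    (S := S) (by omega) fun h2 => h5 (by simpa [Subgraph.induce_verts] using hsmall _ h2)
  have hvA : v ∉ A := fun h => (mem_erase.1 (hAv h)).1 rfl
  have hAS : A ⊆ S := hAv.trans (erase_subset v S)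
  have hinsert : insert v A ⊂ S := by
    refine (insert_subset hvS hAS).ssubset_of_ne fun h => hAv_ne ?_
    rw [← h, erase_insert hvA]
  have hcard : #(insert v A) + #(S \ A) = #S + 1 := by
    have := card_le_card hAv
    rw [card_insert_of_notMem hvA, card_sdiff_of_subset hAS, card_erase_of_mem hvS] at *
    omega
  have := card_edgeFinset_induce_le_add_of_separates hsep
  have := ih _ hinsert (insert_nonempty v A)
  have := ih _ (sdiff_ssubset hAS hA) ⟨v, mem_sdiff.2 ⟨hvS, hvA⟩⟩
  omega

end SimpleGraph

theorem planar_K4_C6_free_small_blocks_edge_bound_general {V : Type*} [Fintype V]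
    (G : SimpleGraph V) [DecidableRel G.Adj]
    (hK4 : G.CliqueFree 4)
    (n : ℕ) (hn : Fintype.card V = n) (hn2 : 2 ≤ n)
    (hblocks : ∀ H : G.Subgraph,
      Maximal (fun K : G.Subgraph => K.coe.IsTwoConnected) H → Nat.card H.verts ≤ 5) :
    (G.edgeFinset.card : ℚ) ≤ 31 / 15 * (n : ℚ) - 7 / 3 := by
  subst hn
  by_cases hn4 : Fintype.card V ≤ 4
  · have turan := hK4.card_edgeFinset_le (r := 3)
    interval_cases Fintype.card V <;>
      simp only [Nat.reduceMod, Nat.reducePow, Nat.reduceSub, Nat.reduceMul, Nat.reduceDiv,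
        Nat.choose] at turan <;> qify at turan <;> linarith
  have : Nonempty V := Fintype.card_pos_iff.1 (by omega)
  have key := card_edgeFinset_induce_add_two_le hK4
    (fun _ => Subgraph.card_verts_le_of_forall_maximal hblocks) univ univ_nonempty
  classical
  rw [← card_filter_edgeFinset_toFinset_subset, filter_true_of_mem fun e _ => subset_univ _,
    card_univ] at key
  have : (#G.edgeFinset : ℚ) + 2 ≤ 2 * Fintype.card V := by exact_mod_cast key
  have : (5 : ℚ) ≤ Fintype.card V := by exact_mod_cast (by omega : 5 ≤ Fintype.card V)
  linarith

/-- Let `G` be a planar graph on `n ≥ 2` vertices containing neither `K₄` nor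
`C₆` as a subgraph, such that `G` contains no maximal `2`-connected subgraph on more than `5`
vertices. Then `e(G) ≤ (31/15) n - 7/3`. -/
theorem planar_K4_C6_free_small_blocks_edge_bound {V : Type*} [Fintype V] [DecidableEq V]
    (G : SimpleGraph V) [DecidableRel G.Adj]
    (hplanar : G.IsPlanar) (hK4 : G.CliqueFree 4) (hC6 : G.CycleFree 6)
    (n : ℕ) (hn : Fintype.card V = n) (hn2 : 2 ≤ n)
    (hblocks : ∀ H : G.Subgraph,
      Maximal (fun K : G.Subgraph => K.coe.IsTwoConnected) H → Nat.card H.verts ≤ 5) :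
    (G.edgeFinset.card : ℚ) ≤ 31 / 15 * (n : ℚ) - 7 / 3 :=
  planar_K4_C6_free_small_blocks_edge_bound_general G hK4 n hn hn2 hblocks
end

section
/- Let G be a plane graph that contains neither K4 nor C5 as a subgraph. Then every triangular block B of G is one of the following three types: a single edge K2, a triangle K3, or B4, the graph on four vertices consisting of two triangles sharing an edge (K4 minus an edge). -/
open SimpleGraph

open PlanarTuran


section Aux

open PlanarTuran PlanarTuran.RotationSystem Relation

variable {V : Type*} {G : SimpleGraph V}

private lemma aux_fix_zpow {α : Type*} (F : Equiv.Perm α) (x : α) (k : ℕ) (hk : (F ^ k) x = x)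
    (n : ℤ) : (F ^ (n * k)) x = x := by
  have h : Function.IsFixedPt (F ^ k) x := hk
  have := h.perm_zpow n
  rwa [← zpow_natCast, ← zpow_mul, mul_comm] at this

private lemma aux_zpow_mod_apply {α : Type*} (F : Equiv.Perm α) (x : α) (k : ℕ)
    (hk : (F ^ k) x = x) (n : ℤ) : (F ^ n) x = (F ^ (n % (k : ℤ))) x := by
  conv_lhs => rw [← Int.emod_add_mul_ediv n k]
  rw [zpow_add, Equiv.Perm.mul_apply, mul_comm (k:ℤ) _, aux_fix_zpow F x k hk]

private lemma aux_orbit3 {α : Type*} (F : Equiv.Perm α) (x : α)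
    (h3 : Set.ncard {y | F.SameCycle x y} = 3) :
    x ≠ F x ∧ x ≠ F (F x) ∧ F x ≠ F (F x) ∧ F (F (F x)) = x ∧
      (∀ y, F.SameCycle x y → y = x ∨ y = F x ∨ y = F (F x)) := by
  set O := {y | F.SameCycle x y} with hOdef
  have hfin : O.Finite := by
    by_contra hinf
    rw [Set.Infinite.ncard (by simpa using hinf)] at h3; omega
  have hO3 : O.ncard = 3 := h3
  have hcase1 : F x ≠ x := by
    intro h1
    have : O ⊆ {x} := by
      rintro y ⟨n, rfl⟩
      rw [aux_zpow_mod_apply F x 1 (by simpa using h1)]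
      push_cast
      have : n % (1:ℤ) = 0 := Int.emod_one n
      rw [this]; rfl
    have := Set.ncard_le_ncard this (Set.finite_singleton x)
    rw [hO3, Set.ncard_singleton] at this; omega
  have hcase2 : (F (F x)) ≠ x := by
    intro h2
    have : O ⊆ {x, F x} := by
      rintro y ⟨n, rfl⟩
      rw [aux_zpow_mod_apply F x 2 (by simpa [pow_two] using h2)]
      push_cast
      have h01 : n % (2:ℤ) = 0 ∨ n % (2:ℤ) = 1 := by omega
      rcases h01 with h | h <;> rw [h]
      · exact Or.inl rfl
      · exact Or.inr rfl
    have := Set.ncard_le_ncard this ((Set.finite_singleton (F x)).insert x)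
    have h2' := Set.ncard_insert_le x {F x}
    rw [hO3] at this
    simp [Set.ncard_singleton] at h2'
    omega
  have hper : (F ^ 3) x = x := by
    by_contra h3'
    have h3'' : F (F (F x)) ≠ x := by simpa [pow_succ, pow_two] using h3'
    have d01 : x ≠ F x := fun h => hcase1 h.symm
    have d02 : x ≠ F (F x) := fun h => hcase2 h.symm
    have d03 : x ≠ F (F (F x)) := fun h => h3'' h.symm
    have d12 : F x ≠ F (F x) := fun h => d01 (F.injective h)
    have d13 : F x ≠ F (F (F x)) := fun h => d02 (F.injective h)
    have d23 : F (F x) ≠ F (F (F x)) := fun h => d12 (F.injective h)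
    have hsub : {x, F x, F (F x), F (F (F x))} ⊆ O := by
      rintro y (rfl | rfl | rfl | rfl)
      exacts [⟨0, rfl⟩, ⟨1, rfl⟩, ⟨2, rfl⟩, ⟨3, rfl⟩]
    have hle := Set.ncard_le_ncard hsub hfin
    rw [hO3] at hle
    have : ({x, F x, F (F x), F (F (F x))} : Set α).ncard = 4 := by
      rw [Set.ncard_insert_of_notMem (by simp [d01, d02, d03])
          (((Set.finite_singleton _).insert _).insert _),
        Set.ncard_insert_of_notMem (by simp [d12, d13]) ((Set.finite_singleton _).insert _),
        Set.ncard_insert_of_notMem (by simp [d23]) (Set.finite_singleton _),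
        Set.ncard_singleton]
    omega
  have hmem3 : ∀ y, F.SameCycle x y → y = x ∨ y = F x ∨ y = F (F x) := by
    rintro y ⟨n, rfl⟩
    rw [aux_zpow_mod_apply F x 3 hper]
    push_cast
    have h012 : n % (3:ℤ) = 0 ∨ n % (3:ℤ) = 1 ∨ n % (3:ℤ) = 2 := by omega
    rcases h012 with h | h | h <;> rw [h]
    · exact Or.inl rfl
    · exact Or.inr (Or.inl rfl)
    · exact Or.inr (Or.inr rfl)
  have d12' : F x ≠ F (F x) := fun h => hcase1 (F.injective h).symm
  exact ⟨fun h => hcase1 h.symm, fun h => hcase2 h.symm, d12',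
    by simpa [pow_succ, pow_two] using hper, hmem3⟩

private lemma aux_facePerm_fst (R : RotationSystem G) (d : G.Dart) :
    (R.facePerm d).fst = d.snd :=
  R.rot_fst d.symm

/-- A face of length 3 is a triangle. -/
private lemma aux_tri_face (R : RotationSystem G) (d : G.Dart) (h3 : R.faceLen d = 3) :
    ∃ u v w : V, G.Adj u v ∧ G.Adj v w ∧ G.Adj u w ∧
      d.edge = s(u,v) ∧
      (∀ e' ∈ ({s(u,v), s(v,w), s(u,w)} : Set (Sym2 V)),
        ∃ d', R.facePerm.SameCycle d d' ∧ d'.edge = e') ∧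
      (∀ d', R.facePerm.SameCycle d d' →
        d'.edge ∈ ({s(u,v), s(v,w), s(u,w)} : Set (Sym2 V))) := by
  obtain ⟨h01, h02, h12, hper, hmem⟩ := aux_orbit3 R.facePerm d h3
  set F := R.facePerm with hF
  have hfst1 : (F d).fst = d.snd := aux_facePerm_fst R d
  have hfst2 : (F (F d)).fst = (F d).snd := aux_facePerm_fst R (F d)
  have hfst3 : (F (F (F d))).fst = (F (F d)).snd := aux_facePerm_fst R (F (F d))
  have hsnd2 : (F (F d)).snd = d.fst := by rw [← hfst3, hper]
  have he1 : d.edge = s(d.fst, d.snd) := rfl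
  have he2 : (F d).edge = s(d.snd, (F d).snd) := by
    show s((F d).fst, (F d).snd) = _
    rw [hfst1]
  have he3 : (F (F d)).edge = s(d.fst, (F d).snd) := by
    show s((F (F d)).fst, (F (F d)).snd) = _
    rw [hfst2, hsnd2, Sym2.eq_swap]
  have ha2 : G.Adj d.snd (F d).snd := by
    have := (F d).adj
    rwa [hfst1] at this
  have ha3 : G.Adj d.fst (F d).snd := by
    have := (F (F d)).adj
    rw [hfst2, hsnd2] at this
    exact this.symm
  refine ⟨d.fst, d.snd, (F d).snd, d.adj, ha2, ha3, rfl, ?_, ?_⟩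
  · rintro e' (rfl | rfl | rfl)
    · exact ⟨d, Equiv.Perm.SameCycle.refl _ _, rfl⟩
    · exact ⟨F d, ⟨1, rfl⟩, he2⟩
    · exact ⟨F (F d), ⟨2, rfl⟩, he3⟩
  · intro d' hd'
    rcases hmem d' hd' with rfl | rfl | rfl
    · exact Or.inl rfl
    · exact Or.inr (Or.inl he2)
    · exact Or.inr (Or.inr he3)

private lemma aux_c5 (hC5 : G.CycleFree 5)
    (a b c d e : V) (hab : a ≠ b) (hac : a ≠ c) (had : a ≠ d) (hae : a ≠ e)
    (hbc : b ≠ c) (hbd : b ≠ d) (hbe : b ≠ e) (hcd : c ≠ d) (hce : c ≠ e) (hde : d ≠ e)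
    (h1 : G.Adj a b) (h2 : G.Adj b c) (h3 : G.Adj c d) (h4 : G.Adj d e) (h5 : G.Adj e a) :
    False := by
  apply hC5 (SimpleGraph.Walk.cons h1 (SimpleGraph.Walk.cons h2 (SimpleGraph.Walk.cons h3
    (SimpleGraph.Walk.cons h4 (SimpleGraph.Walk.cons h5 SimpleGraph.Walk.nil)))))
  · constructor
    · constructor
      · constructor
        simp [SimpleGraph.Walk.edges, Sym2.eq, Sym2.rel_iff', hab, hac, had, hae, hbc, hbd,
          hbe, hcd, hce, hde, hab.symm, hac.symm, had.symm, hae.symm, hbc.symm, hbd.symm,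
          hbe.symm, hcd.symm, hce.symm, hde.symm]
      · simp
    · simp [hab.symm, hbc.symm, hbd.symm, hbe.symm, hcd.symm, hce.symm, hde.symm, hac.symm,
        had.symm, hae.symm, hbc, hbd, hbe, hcd, hce, hde]
  · simp

private lemma aux_k4 (hK4 : G.CliqueFree 4) (a b c d : V)
    (hab : a ≠ b) (hac : a ≠ c) (had : a ≠ d) (hbc : b ≠ c) (hbd : b ≠ d) (hcd : c ≠ d)
    (h1 : G.Adj a b) (h2 : G.Adj a c) (h3 : G.Adj a d) (h4 : G.Adj b c) (h5 : G.Adj b d)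
    (h6 : G.Adj c d) : False := by
  classical
  apply hK4 {a, b, c, d}
  constructor
  · intro x hx y hy hxy
    simp only [Finset.coe_insert, Set.mem_insert_iff, Finset.coe_singleton,
      Set.mem_singleton_iff] at hx hy
    rcases hx with rfl | rfl | rfl | rfl <;> rcases hy with rfl | rfl | rfl | rfl <;>
      first | exact absurd rfl hxy | assumption | exact h1.symm | exact h2.symm |
        exact h3.symm | exact h4.symm | exact h5.symm | exact h6.symm
  · rw [Finset.card_insert_of_notMem (by simp [hab, hac, had]),
      Finset.card_insert_of_notMem (by simp [hbc, hbd]),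
      Finset.card_insert_of_notMem (by simp [hcd]), Finset.card_singleton]

/-- A triangular 3-face sitting on the edge `{p,r}` of the `B4` on `p q r z` must be the
triangle `p q r` itself, on pain of creating a `K4` or a `C5`. -/
private lemma aux_side_ext (hK4 : G.CliqueFree 4) (hC5 : G.CycleFree 5)
    (p q r z : V) (hpq : G.Adj p q) (hpr : G.Adj p r) (hqr : G.Adj q r)
    (hpz : G.Adj p z) (hqz : G.Adj q z) (hrz : r ≠ z)
    (x y w : V) (hxy : s(x,y) = s(p,r)) (hxw : G.Adj x w) (hyw : G.Adj y w) :
    s(x,w) ∈ ({s(p,q), s(q,r)} : Set (Sym2 V)) ∧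
      s(y,w) ∈ ({s(p,q), s(q,r)} : Set (Sym2 V)) := by
  have key : ∀ w', G.Adj p w' → G.Adj r w' →
      s(p,w') ∈ ({s(p,q), s(q,r)} : Set (Sym2 V)) ∧
        s(r,w') ∈ ({s(p,q), s(q,r)} : Set (Sym2 V)) := by
    intro w' hpw hrw
    by_cases hwq : w' = q
    · subst hwq
      exact ⟨Or.inl rfl, Or.inr (by rw [Sym2.eq_swap]; rfl)⟩
    by_cases hwz : w' = z
    · subst hwz
      exact absurd (aux_k4 hK4 p q r w' hpq.ne hpr.ne hpz.ne hqr.ne hqz.ne hrz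
        hpq hpr hpz hqr hqz hrw) (fun h => h)
    · exact absurd (aux_c5 hC5 w' r q z p hrw.ne' hwq hwz hpw.ne' hqr.ne' hrz hpr.ne'
        hqz.ne hpq.ne' hpz.ne' hrw.symm hqr.symm hqz hpz.symm hpw) (fun h => h)
  rcases Sym2.eq_iff.mp hxy with ⟨rfl, rfl⟩ | ⟨rfl, rfl⟩
  · exact ⟨(key w hxw hyw).1, (key w hxw hyw).2⟩
  · exact ⟨(key w hyw hxw).2, (key w hyw hxw).1⟩

/-- The main `B4` case: if the triangular block of `e` contains two distinct triangular
faces `p q r` and `p q z` sharing the edge `{p,q}`, then it is exactly the `B4` on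
`p, q, r, z`. -/
private lemma aux_main_case (R : RotationSystem G)
    (hK4 : G.CliqueFree 4) (hC5 : G.CycleFree 5) (e : Sym2 V)
    (p q r z : V)
    (hpq : G.Adj p q) (hpr : G.Adj p r) (hqr : G.Adj q r)
    (hpz : G.Adj p z) (hqz : G.Adj q z) (hrz : r ≠ z)
    (d : G.Dart) (hde : d.edge = e) (hd3 : R.faceLen d = 3)
    (hcovd : ∀ d', R.facePerm.SameCycle d d' →
      d'.edge ∈ ({s(p,q), s(q,r), s(p,r)} : Set (Sym2 V)))
    (hsupd : ∀ e' ∈ ({s(p,q), s(q,r), s(p,r)} : Set (Sym2 V)),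
      ∃ d', R.facePerm.SameCycle d d' ∧ d'.edge = e')
    (g : G.Dart) (hge : g.edge = s(p,q)) (hg3 : R.faceLen g = 3)
    (hcovg : ∀ d', R.facePerm.SameCycle g d' →
      d'.edge ∈ ({s(p,q), s(q,z), s(p,z)} : Set (Sym2 V)))
    (hsupg : ∀ e' ∈ ({s(p,q), s(q,z), s(p,z)} : Set (Sym2 V)),
      ∃ d', R.facePerm.SameCycle g d' ∧ d'.edge = e')
    (hdg : ¬ R.facePerm.SameCycle d g) :
    IsB4Block (R.triBlockOf e) := by
  set S : Set (Sym2 V) := {s(p,q), s(q,r), s(p,r), s(p,z), s(q,z)} with hS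
  have hTS : ({s(p,q), s(q,r), s(p,r)} : Set (Sym2 V)) ⊆ S := by
    rintro a (rfl | rfl | rfl)
    · exact Or.inl rfl
    · exact Or.inr (Or.inl rfl)
    · exact Or.inr (Or.inr (Or.inl rfl))
  have hT2S : ({s(p,q), s(q,z), s(p,z)} : Set (Sym2 V)) ⊆ S := by
    rintro a (rfl | rfl | rfl)
    · exact Or.inl rfl
    · exact Or.inr (Or.inr (Or.inr (Or.inr rfl)))
    · exact Or.inr (Or.inr (Or.inr (Or.inl rfl)))
  have heT : e ∈ ({s(p,q), s(q,r), s(p,r)} : Set (Sym2 V)) := by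
    rw [← hde]; exact hcovd d (Equiv.Perm.SameCycle.refl _ _)
  -- closure of S under shares3Face
  have hclosed : ∀ c ∈ S, ∀ b', R.shares3Face c b' → b' ∈ S := by
    rintro c hc b' ⟨h₁, h₂, he₁, he₂, h₁3, hsc⟩
    obtain ⟨x₂, y₂, w₂, ha1, ha2, ha3, hedge, hsup2, hcov2⟩ := aux_tri_face R h₁ h₁3
    have hb' : b' ∈ ({s(x₂,y₂), s(y₂,w₂), s(x₂,w₂)} : Set (Sym2 V)) := by
      rw [← he₂]; exact hcov2 h₂ hsc
    rcases hb' with hb' | hb' | hb'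
    · rw [hb', ← hedge, he₁]; exact hc
    all_goals {
      rcases hc with hc | hc | hc | hc | hc
      -- c = s(p,q) : use that the two faces at the edge pq are the given two triangles
      ·
        obtain ⟨dt, hdt_sc, hdt_e⟩ := hsupd (s(p,q)) (Or.inl rfl)
        have hgd : g = dt.symm := by
          rcases (SimpleGraph.dart_edge_eq_iff g dt).mp (hge.trans hdt_e.symm) with h | h
          · exact absurd (by rw [h]; exact hdt_sc : R.facePerm.SameCycle d g) hdg
          · exact h
        have h1cases := (SimpleGraph.dart_edge_eq_iff h₁ dt).mp
          (he₁.trans (hc.trans hdt_e.symm))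
        rcases h1cases with rfl | h1d
        · have hm := hcovd h₂ (hdt_sc.trans hsc)
          rw [he₂] at hm
          exact hTS hm
        · have h1g : h₁ = g := by rw [h1d, hgd]
          have hm := hcovg h₂ (by rw [← h1g]; exact hsc)
          rw [he₂] at hm
          exact hT2S hm
      -- c = s(q,r)
      ·
        have hxy : s(x₂,y₂) = s(q,r) := by rw [← hedge, he₁, hc]
        have hres := aux_side_ext hK4 hC5 q p r z hpq.symm hqr hpr hqz hpz hrz
          x₂ y₂ w₂ hxy ha3 ha2
        first
        | (rcases hres.2 with h | h
           · rw [hb', h, Sym2.eq_swap]; exact Or.inl rfl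
           · rw [hb', h]; exact Or.inr (Or.inr (Or.inl rfl)))
        | (rcases hres.1 with h | h
           · rw [hb', h, Sym2.eq_swap]; exact Or.inl rfl
           · rw [hb', h]; exact Or.inr (Or.inr (Or.inl rfl)))
      -- c = s(p,r)
      ·
        have hxy : s(x₂,y₂) = s(p,r) := by rw [← hedge, he₁, hc]
        have hres := aux_side_ext hK4 hC5 p q r z hpq hpr hqr hpz hqz hrz
          x₂ y₂ w₂ hxy ha3 ha2
        first
        | (rcases hres.2 with h | h
           · rw [hb', h]; exact Or.inl rfl
           · rw [hb', h]; exact Or.inr (Or.inl rfl))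
        | (rcases hres.1 with h | h
           · rw [hb', h]; exact Or.inl rfl
           · rw [hb', h]; exact Or.inr (Or.inl rfl))
      -- c = s(p,z)
      ·
        have hxy : s(x₂,y₂) = s(p,z) := by rw [← hedge, he₁, hc]
        have hres := aux_side_ext hK4 hC5 p q z r hpq hpz hqz hpr hqr (Ne.symm hrz)
          x₂ y₂ w₂ hxy ha3 ha2
        first
        | (rcases hres.2 with h | h
           · rw [hb', h]; exact Or.inl rfl
           · rw [hb', h]; exact Or.inr (Or.inr (Or.inr (Or.inr rfl))))
        | (rcases hres.1 with h | h
           · rw [hb', h]; exact Or.inl rfl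
           · rw [hb', h]; exact Or.inr (Or.inr (Or.inr (Or.inr rfl))))
      -- c = s(q,z)
      ·
        have hxy : s(x₂,y₂) = s(q,z) := by rw [← hedge, he₁, hc]
        have hres := aux_side_ext hK4 hC5 q p z r hpq.symm hqz hpz hqr hpr (Ne.symm hrz)
          x₂ y₂ w₂ hxy ha3 ha2
        first
        | (rcases hres.2 with h | h
           · rw [hb', h, Sym2.eq_swap]; exact Or.inl rfl
           · rw [hb', h]; exact Or.inr (Or.inr (Or.inr (Or.inl rfl))))
        | (rcases hres.1 with h | h
           · rw [hb', h, Sym2.eq_swap]; exact Or.inl rfl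
           · rw [hb', h]; exact Or.inr (Or.inr (Or.inr (Or.inl rfl))))
    }
  have hsub : R.triBlockOf e ⊆ S := by
    intro b'' hb''
    induction hb'' with
    | refl => exact hTS heT
    | tail _ hstep ih => exact hclosed _ ih _ hstep
  have hsup : S ⊆ R.triBlockOf e := by
    have hT : ∀ t ∈ ({s(p,q), s(q,r), s(p,r)} : Set (Sym2 V)), R.shares3Face e t := by
      intro t ht
      obtain ⟨d', hsc, hed⟩ := hsupd t ht
      exact ⟨d, d', hde, hed, hd3, hsc⟩
    have hT2 : ∀ t ∈ ({s(p,q), s(q,z), s(p,z)} : Set (Sym2 V)),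
        R.shares3Face (s(p,q)) t := by
      intro t ht
      obtain ⟨d', hsc, hed⟩ := hsupg t ht
      exact ⟨g, d', hge, hed, hg3, hsc⟩
    have hpqB : Relation.ReflTransGen R.shares3Face e (s(p,q)) :=
      Relation.ReflTransGen.single (hT _ (Or.inl rfl))
    rintro a (rfl | rfl | rfl | rfl | rfl)
    · exact hpqB
    · exact Relation.ReflTransGen.single (hT _ (Or.inr (Or.inl rfl)))
    · exact Relation.ReflTransGen.single (hT _ (Or.inr (Or.inr rfl)))
    · exact hpqB.tail (hT2 _ (Or.inr (Or.inr rfl)))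
    · exact hpqB.tail (hT2 _ (Or.inr (Or.inl rfl)))
  refine ⟨r, p, q, z, hpr.ne', hqr.ne', hrz, hpq.ne, hpz.ne, hqz.ne, ?_⟩
  rw [hsub.antisymm hsup]
  ext a
  simp only [hS, Set.mem_insert_iff, Set.mem_singleton_iff]
  constructor <;> rintro (h | h | h | h | h) <;>
    simp [h, Sym2.eq_swap] <;> tauto

end Aux

/-- In a plane graph containing neither `K₄` nor `C₅` as a subgraph, every
triangular block is a single edge `K₂`, a triangle `K₃`, or `B₄` (two triangles sharing an
edge). -/
theorem triangularBlock_types_K4_C5_free {V : Type*} (G : SimpleGraph V)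
    (R : PlanarTuran.RotationSystem G) (hplane : R.GenusZero)
    (hK4 : G.CliqueFree 4) (hC5 : G.CycleFree 5) :
    ∀ B : Set (Sym2 V), R.IsTriangularBlock B →
      PlanarTuran.IsK2Block B ∨ PlanarTuran.IsK3Block B ∨ PlanarTuran.IsB4Block B := by
  classical
  rintro B ⟨e, heE, rfl⟩
  by_cases h1 : ∃ d : G.Dart, d.edge = e ∧ R.faceLen d = 3
  case neg =>
    -- no 3-face on e : the block is K2
    left
    induction e using Sym2.ind with
    | _ u v =>
      have hadj : G.Adj u v := heE
      refine ⟨u, v, hadj.ne, ?_⟩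
      ext b
      simp only [RotationSystem.triBlockOf, Set.mem_setOf_eq, Set.mem_singleton_iff]
      constructor
      · intro h
        rcases Relation.ReflTransGen.cases_head h with rfl | ⟨c, hc, -⟩
        · rfl
        · obtain ⟨d₁, _, he₁, _, h₁3, _⟩ := hc
          exact absurd ⟨d₁, he₁, h₁3⟩ h1
      · rintro rfl
        exact Relation.ReflTransGen.refl
  case pos =>
    obtain ⟨d, hde, hd3⟩ := h1
    obtain ⟨u, v, w, huv, hvw, huw, hedg, hsupd0, hcovd0⟩ := aux_tri_face R d hd3
    have hde' : e = s(u,v) := by rw [← hde, hedg]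
    by_cases h2 : ∀ t ∈ ({s(u,v), s(v,w), s(u,w)} : Set (Sym2 V)), ∀ b,
        R.shares3Face t b → b ∈ ({s(u,v), s(v,w), s(u,w)} : Set (Sym2 V))
    case pos =>
      -- the block is K3
      right; left
      refine ⟨u, v, w, huv.ne, huw.ne, hvw.ne, ?_⟩
      apply Set.Subset.antisymm
      · intro b hb
        induction hb with
        | refl => rw [hde']; exact Or.inl rfl
        | tail _ hstep ih => exact h2 _ ih _ hstep
      · intro t ht
        obtain ⟨d', hsc, hed⟩ := hsupd0 t ht
        exact Relation.ReflTransGen.single ⟨d, d', hde, hed, hd3, hsc⟩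
    case neg =>
      -- the block is B4
      right; right
      push_neg at h2
      obtain ⟨t, htT, b, hsb, hbT⟩ := h2
      obtain ⟨g₁, g₂, hg₁e, hg₂e, hg₁3, hgsc⟩ := hsb
      obtain ⟨x, y, z, hxy', hyz', hxz', hgedge, hsupg0, hcovg0⟩ := aux_tri_face R g₁ hg₁3
      have hb2 : b ∈ ({s(x,y), s(y,z), s(x,z)} : Set (Sym2 V)) := by
        rw [← hg₂e]; exact hcovg0 g₂ hgsc
      have hxyt : s(x,y) = t := by rw [← hgedge, hg₁e]
      have hdg : ¬ R.facePerm.SameCycle d g₁ := by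
        intro hsc
        exact hbT (by rw [← hg₂e]; exact hcovd0 g₂ (hsc.trans hgsc))
      rcases htT with ht | ht | ht <;>
        rcases Sym2.eq_iff.mp (hxyt.trans ht) with ⟨rfl, rfl⟩ | ⟨rfl, rfl⟩
      · have hTeq : ({s(x,y), s(y,w), s(x,w)} : Set (Sym2 V)) = {s(x,y), s(y,w), s(x,w)} :=
          rfl
        exact aux_main_case R hK4 hC5 e x y w z huv huw hvw hxz' hyz'
          (fun hwz => hbT (by subst hwz; exact hTeq.symm ▸ hb2)) d hde hd3
          (fun d' h => hTeq ▸ hcovd0 d' h) (fun e' he' => hsupd0 e' (hTeq.symm ▸ he'))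
          g₁ hgedge hg₁3 hcovg0 hsupg0 hdg
      · have hTeq : ({s(y,x), s(x,w), s(y,w)} : Set (Sym2 V)) = {s(x,y), s(y,w), s(x,w)} := by
          ext a
          simp only [Set.mem_insert_iff, Set.mem_singleton_iff]
          constructor <;> rintro (h | h | h) <;> simp [h, Sym2.eq_swap] <;> tauto
        exact aux_main_case R hK4 hC5 e x y w z huv.symm hvw huw hxz' hyz'
          (fun hwz => hbT (by subst hwz; exact hTeq.symm ▸ hb2)) d hde hd3
          (fun d' h => hTeq ▸ hcovd0 d' h) (fun e' he' => hsupd0 e' (hTeq.symm ▸ he'))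
          g₁ hgedge hg₁3 hcovg0 hsupg0 hdg
      · have hTeq : ({s(u,x), s(x,y), s(u,y)} : Set (Sym2 V)) = {s(x,y), s(y,u), s(x,u)} := by
          ext a
          simp only [Set.mem_insert_iff, Set.mem_singleton_iff]
          constructor <;> rintro (h | h | h) <;> simp [h, Sym2.eq_swap] <;> tauto
        exact aux_main_case R hK4 hC5 e x y u z hvw huv.symm huw.symm hxz' hyz'
          (fun hwz => hbT (by subst hwz; exact hTeq.symm ▸ hb2)) d hde hd3
          (fun d' h => hTeq ▸ hcovd0 d' h) (fun e' he' => hsupd0 e' (hTeq.symm ▸ he'))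
          g₁ hgedge hg₁3 hcovg0 hsupg0 hdg
      · have hTeq : ({s(u,y), s(y,x), s(u,x)} : Set (Sym2 V)) = {s(x,y), s(y,u), s(x,u)} := by
          ext a
          simp only [Set.mem_insert_iff, Set.mem_singleton_iff]
          constructor <;> rintro (h | h | h) <;> simp [h, Sym2.eq_swap] <;> tauto
        exact aux_main_case R hK4 hC5 e x y u z hvw.symm huw.symm huv.symm hxz' hyz'
          (fun hwz => hbT (by subst hwz; exact hTeq.symm ▸ hb2)) d hde hd3
          (fun d' h => hTeq ▸ hcovd0 d' h) (fun e' he' => hsupd0 e' (hTeq.symm ▸ he'))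
          g₁ hgedge hg₁3 hcovg0 hsupg0 hdg
      · have hTeq : ({s(x,v), s(v,y), s(x,y)} : Set (Sym2 V)) = {s(x,y), s(y,v), s(x,v)} := by
          ext a
          simp only [Set.mem_insert_iff, Set.mem_singleton_iff]
          constructor <;> rintro (h | h | h) <;> simp [h, Sym2.eq_swap] <;> tauto
        exact aux_main_case R hK4 hC5 e x y v z huw huv hvw.symm hxz' hyz'
          (fun hwz => hbT (by subst hwz; exact hTeq.symm ▸ hb2)) d hde hd3
          (fun d' h => hTeq ▸ hcovd0 d' h) (fun e' he' => hsupd0 e' (hTeq.symm ▸ he'))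
          g₁ hgedge hg₁3 hcovg0 hsupg0 hdg
      · have hTeq : ({s(y,v), s(v,x), s(y,x)} : Set (Sym2 V)) = {s(x,y), s(y,v), s(x,v)} := by
          ext a
          simp only [Set.mem_insert_iff, Set.mem_singleton_iff]
          constructor <;> rintro (h | h | h) <;> simp [h, Sym2.eq_swap] <;> tauto
        exact aux_main_case R hK4 hC5 e x y v z huw.symm hvw.symm huv hxz' hyz'
          (fun hwz => hbT (by subst hwz; exact hTeq.symm ▸ hb2)) d hde hd3
          (fun d' h => hTeq ▸ hcovd0 d' h) (fun e' he' => hsupd0 e' (hTeq.symm ▸ he'))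
          g₁ hgedge hg₁3 hcovg0 hsupg0 hdg
end
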